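/- arXiv:2601.21089 — 4 statements merged into one kernel-verified Lean document; each statement's English description precedes it below -/
import Mathlib

section
/- Let Λ ⊂ ℝ^d be a compact convex set with positive Lebesgue measure, let Q : ℝ^d → ℝ be continuous on Λ, let q0 ∈ ℝ be such that the decision boundary K = {x ∈ Λ : Q(x) = q0} is nonempty, and assume that for every z ∈ K and every r > 0 the sets {x ∈ Λ : Q(x) > q0} ∩ B(z, r) and {x ∈ Λ : Q(x) < q0} ∩ B(z, r) have positive Lebesgue measure. Let x_1, x_2, … be i.i.d. random points uniformly distributed on Λ, label each sample y_i = +1 if Q(x_i) ≥ q0 and y_i = −1 otherwise, and for each n let M_n denote the maximum of ‖x_i − x_j‖ over all pairs (x_i, x_j) with 1 ≤ i < j ≤ n that are Gabriel neighbors of {x_1, …, x_n} and have y_i ≠ y_j (with M_n = 0 if no such pair exists). Then for every ε > 0, P(M_n > ε) → 0 as n → ∞. -/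
/-! The midpoint of a Gabriel edge `ab` between points of the convex set `Λ` lies in `Λ`, and no
sample lies within `|ab| / 2` of it. Hence, once every point of `Λ` is within `ε / 2` of a sample,
no Gabriel edge, labelled or not, is longer than `ε`. Covering the compact set `Λ` by finitely
many `ε / 4`-balls, each of positive probability, the chance that the first `n` i.i.d. samples
miss one of them decays geometrically in `n`. -/

open MeasureTheory ProbabilityTheory Metric Filter Topology

/-- `a` and `b` are Gabriel neighbors of the point set `X`: both belong to `X`, are distinct,
and the open ball having the segment from `a` to `b` as a diameter contains no point of `X`
other than `a` and `b`. -/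
def IsGabrielNbr {d : ℕ} (X : Set (EuclideanSpace ℝ (Fin d)))
    (a b : EuclideanSpace ℝ (Fin d)) : Prop :=
  a ∈ X ∧ b ∈ X ∧ a ≠ b ∧
    ∀ c ∈ X, c ≠ a → c ≠ b → c ∉ Metric.ball (midpoint ℝ a b) (dist a b / 2)

/-- The maximum distance between pairs of Gabriel neighbors of `{x_0, …, x_{n-1}}`
with different labels (label `+1` iff `Q x ≥ q0`), set to `0` when no such pair exists. -/
noncomputable def gabrielEditedMaxDist {d : ℕ} {Ω : Type*}
    (X : ℕ → Ω → EuclideanSpace ℝ (Fin d))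
    (Q : EuclideanSpace ℝ (Fin d) → ℝ) (q0 : ℝ) (n : ℕ) (ω : Ω) : ℝ :=
  sSup (insert (0 : ℝ)
    {r : ℝ | ∃ i, ∃ j, i < j ∧ j < n ∧
      IsGabrielNbr ((fun k => X k ω) '' {k | k < n}) (X i ω) (X j ω) ∧
      ¬ ((q0 ≤ Q (X i ω)) ↔ (q0 ≤ Q (X j ω))) ∧
      r = dist (X i ω) (X j ω)})

theorem Convex.interior_nonempty_of_addHaar_pos {E : Type*} [NormedAddCommGroup E]
    [NormedSpace ℝ E] [MeasurableSpace E] [BorelSpace E] [FiniteDimensional ℝ E]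
    (μ : Measure E) [μ.IsAddHaarMeasure] {s : Set E} (hs : Convex ℝ s) (hμs : 0 < μ s) :
    (interior s).Nonempty := by
  rw [hs.interior_nonempty_iff_affineSpan_eq_top]
  by_contra h
  exact hμs.ne' <|
    measure_mono_null (subset_affineSpan ℝ s) (Measure.addHaar_affineSubspace μ _ h)

theorem Convex.addHaar_inter_ball_pos {E : Type*} [NormedAddCommGroup E]
    [NormedSpace ℝ E] [MeasurableSpace E] [BorelSpace E] [FiniteDimensional ℝ E]
    (μ : Measure E) [μ.IsAddHaarMeasure] {s : Set E} (hs : Convex ℝ s) (hμs : 0 < μ s)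
    {u : E} (hu : u ∈ s) {r : ℝ} (hr : 0 < r) : 0 < μ (s ∩ ball u r) := by
  have hu' : u ∈ closure (interior s) := by
    rw [hs.closure_interior_eq_closure_of_nonempty_interior
      (hs.interior_nonempty_of_addHaar_pos μ hμs)]
    exact subset_closure hu
  obtain ⟨p, hp, hup⟩ := Metric.mem_closure_iff.1 hu' r hr
  refine Measure.measure_pos_of_nonempty_interior μ ⟨p, ?_⟩
  rw [interior_inter, isOpen_ball.interior_eq]
  exact ⟨hp, mem_ball'.2 hup⟩

namespace IsGabrielNbr

variable {d : ℕ} {X : Set (EuclideanSpace ℝ (Fin d))} {a b : EuclideanSpace ℝ (Fin d)}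

theorem half_dist_le_dist_midpoint (h : IsGabrielNbr X a b) {w : EuclideanSpace ℝ (Fin d)}
    (hw : w ∈ X) : dist a b / 2 ≤ dist w (midpoint ℝ a b) := by
  have ha : dist a (midpoint ℝ a b) = dist a b / 2 := by
    rw [dist_left_midpoint, Real.norm_two]; ring
  have hb : dist b (midpoint ℝ a b) = dist a b / 2 := by
    rw [← dist_left_midpoint_eq_dist_right_midpoint, ha]
  by_contra! hlt
  have hwa : w ≠ a := by rintro rfl; linarith
  have hwb : w ≠ b := by rintro rfl; linarith
  exact h.2.2.2 w hw hwa hwb (mem_ball.2 hlt)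

theorem dist_lt_of_forall_exists_dist_lt (h : IsGabrielNbr X a b)
    {Λ : Set (EuclideanSpace ℝ (Fin d))} {δ : ℝ}
    (hΛ : Convex ℝ Λ) (ha : a ∈ Λ) (hb : b ∈ Λ) (hX : ∀ m ∈ Λ, ∃ w ∈ X, dist w m < δ) :
    dist a b < 2 * δ := by
  obtain ⟨w, hw, hwm⟩ := hX _ (hΛ.segment_subset ha hb (midpoint_mem_segment a b))
  linarith [h.half_dist_le_dist_midpoint hw]

end IsGabrielNbr

theorem gabrielEditedMaxDist_le {d : ℕ} {Ω : Type*} {X : ℕ → Ω → EuclideanSpace ℝ (Fin d)}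
    {Q : EuclideanSpace ℝ (Fin d) → ℝ} {q0 : ℝ} {n : ℕ} {ω : Ω}
    {Λ : Set (EuclideanSpace ℝ (Fin d))} {δ : ℝ} (hδ : 0 ≤ δ) (hΛ : Convex ℝ Λ)
    (hXΛ : ∀ k < n, X k ω ∈ Λ) (hdense : ∀ m ∈ Λ, ∃ k < n, dist (X k ω) m < δ) :
    gabrielEditedMaxDist X Q q0 n ω ≤ 2 * δ := by
  refine csSup_le (Set.insert_nonempty _ _) ?_
  rintro r (rfl | ⟨i, j, hij, hjn, hGab, -, rfl⟩)
  · positivity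
  refine (hGab.dist_lt_of_forall_exists_dist_lt hΛ (hXΛ i (hij.trans hjn)) (hXΛ j hjn)
    fun m hm => ?_).le
  obtain ⟨k, hk, hkm⟩ := hdense m hm
  exact ⟨X k ω, ⟨k, hk, rfl⟩, hkm⟩

namespace ProbabilityTheory.iIndepFun

variable {Ω E : Type*} [MeasurableSpace Ω] {P : Measure Ω} [MeasurableSpace E] {μ : Measure E}
  {X : ℕ → Ω → E}

theorem measure_forall_lt_notMem_eq_pow (hXmeas : ∀ i, Measurable (X i))
    (hXindep : iIndepFun X P) (hXlaw : ∀ i, P.map (X i) = μ) {S : Set E}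
    (hS : MeasurableSet S) (n : ℕ) :
    P (⋂ i ∈ Finset.range n, X i ⁻¹' Sᶜ) = μ Sᶜ ^ n := by
  rw [hXindep.measure_inter_preimage_eq_mul _ fun _ _ => hS.compl]
  simp_rw [← Measure.map_apply (hXmeas _) hS.compl, hXlaw, Finset.prod_const,
    Finset.card_range]

theorem tendsto_measure_forall_lt_notMem [IsProbabilityMeasure P]
    (hXmeas : ∀ i, Measurable (X i)) (hXindep : iIndepFun X P) (hXlaw : ∀ i, P.map (X i) = μ)
    {S : Set E} (hS : MeasurableSet S) (hμS : 0 < μ S) :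
    Tendsto (fun n => P (⋂ i ∈ Finset.range n, X i ⁻¹' Sᶜ)) atTop (𝓝 0) := by
  have : IsProbabilityMeasure μ :=
    hXlaw 0 ▸ Measure.isProbabilityMeasure_map (hXmeas 0).aemeasurable
  simp_rw [hXindep.measure_forall_lt_notMem_eq_pow hXmeas hXlaw hS]
  refine ENNReal.tendsto_pow_atTop_nhds_zero_of_lt_one ?_
  rw [prob_compl_eq_one_sub hS]
  exact ENNReal.sub_lt_self ENNReal.one_ne_top one_ne_zero hμS.ne'

theorem tendsto_measure_exists_forall_le_dist [IsProbabilityMeasure P] [PseudoMetricSpace E]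
    [OpensMeasurableSpace E] (hXmeas : ∀ i, Measurable (X i)) (hXindep : iIndepFun X P)
    (hXlaw : ∀ i, P.map (X i) = μ) {Λ : Set E} (hΛ : IsCompact Λ)
    (hμΛ : ∀ u ∈ Λ, ∀ r > 0, 0 < μ (ball u r)) {δ : ℝ} (hδ : 0 < δ) :
    Tendsto (fun n => P {ω | ∃ m ∈ Λ, ∀ k < n, δ ≤ dist (X k ω) m}) atTop (𝓝 0) := by
  obtain ⟨F, hFΛ, hFcov⟩ :=
    hΛ.elim_nhds_subcover (fun u => ball u (δ / 2)) fun u _ => ball_mem_nhds u (half_pos hδ)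
  have hsub : ∀ n, {ω | ∃ m ∈ Λ, ∀ k < n, δ ≤ dist (X k ω) m} ⊆
      ⋃ u ∈ F, ⋂ k ∈ Finset.range n, X k ⁻¹' (ball u (δ / 2))ᶜ := by
    rintro n ω ⟨m, hm, hfar⟩
    obtain ⟨u, hu, hmu⟩ := Set.mem_iUnion₂.1 (hFcov hm)
    refine Set.mem_biUnion hu (Set.mem_iInter₂.2 fun k hk hku => ?_)
    linarith [hfar k (Finset.mem_range.1 hk), dist_triangle_right (X k ω) m u,
      mem_ball.1 hku, mem_ball.1 hmu]
  have hsum : Tendsto (fun n => ∑ u ∈ F, P (⋂ k ∈ Finset.range n, X k ⁻¹' (ball u (δ / 2))ᶜ))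
      atTop (𝓝 0) := by
    simpa using tendsto_finsetSum F fun u hu => hXindep.tendsto_measure_forall_lt_notMem
      hXmeas hXlaw measurableSet_ball (hμΛ u (hFΛ u hu) _ (half_pos hδ))
  exact tendsto_of_tendsto_of_tendsto_of_le_of_le tendsto_const_nhds hsum (fun _ => zero_le)
    fun n => (measure_mono (hsub n)).trans (measure_biUnion_finset_le _ _)

end ProbabilityTheory.iIndepFun

theorem stmt0_general {d : ℕ} (Λ : Set (EuclideanSpace ℝ (Fin d)))
    (hΛcompact : IsCompact Λ) (hΛconvex : Convex ℝ Λ) (hΛpos : 0 < volume Λ)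
    (Q : EuclideanSpace ℝ (Fin d) → ℝ) (q0 : ℝ)
    {Ω : Type*} [MeasurableSpace Ω] (P : Measure Ω) [IsProbabilityMeasure P]
    (X : ℕ → Ω → EuclideanSpace ℝ (Fin d))
    (hXmeas : ∀ i, Measurable (X i))
    (hXindep : iIndepFun X P)
    (hXunif : ∀ i, Measure.map (X i) P = (volume Λ)⁻¹ • volume.restrict Λ)
    (ε : ℝ) (hε : 0 < ε) :
    Tendsto (fun n => P {ω | ε < gabrielEditedMaxDist X Q q0 n ω}) atTop (nhds 0) := by
  have hΛmeas : MeasurableSet Λ := hΛcompact.isClosed.measurableSet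
  have hlaw_ball : ∀ u ∈ Λ, ∀ r > 0, 0 < ((volume Λ)⁻¹ • volume.restrict Λ) (ball u r) := by
    intro u hu r hr
    rw [Measure.smul_apply, Measure.restrict_apply measurableSet_ball, Set.inter_comm,
      smul_eq_mul]
    exact ENNReal.mul_pos (ENNReal.inv_ne_zero.2 hΛcompact.measure_lt_top.ne)
      (hΛconvex.addHaar_inter_ball_pos volume hΛpos hu hr).ne'
  have hXΛ : ∀ᵐ ω ∂P, ∀ k, X k ω ∈ Λ := ae_all_iff.2 fun k => ae_iff.2 <| by
    change P (X k ⁻¹' Λᶜ) = 0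
    rw [← Measure.map_apply (hXmeas k) hΛmeas.compl, hXunif k]
    simp [Measure.restrict_apply hΛmeas.compl]
  refine tendsto_of_tendsto_of_tendsto_of_le_of_le tendsto_const_nhds
    (hXindep.tendsto_measure_exists_forall_le_dist hXmeas hXunif hΛcompact hlaw_ball
      (half_pos hε)) (fun _ => zero_le) fun n => measure_mono_ae ?_
  filter_upwards [hXΛ] with ω hω hbig
  show ∃ m ∈ Λ, ∀ k < n, ε / 2 ≤ dist (X k ω) m
  by_contra! hnear
  have hle := gabrielEditedMaxDist_le (Q := Q) (q0 := q0) (half_pos hε).le hΛconvex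
    (fun k _ => hω k) hnear
  exact (not_lt.2 (hle.trans_eq (by ring))) hbig

theorem stmt0 {d : ℕ} (Λ : Set (EuclideanSpace ℝ (Fin d)))
    (hΛcompact : IsCompact Λ) (hΛconvex : Convex ℝ Λ) (hΛpos : 0 < volume Λ)
    (Q : EuclideanSpace ℝ (Fin d) → ℝ) (hQ : ContinuousOn Q Λ) (q0 : ℝ)
    (hK : ({x ∈ Λ | Q x = q0}).Nonempty)
    (hsides : ∀ z ∈ {x ∈ Λ | Q x = q0}, ∀ r : ℝ, 0 < r →
      0 < volume ({x ∈ Λ | q0 < Q x} ∩ Metric.ball z r) ∧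
      0 < volume ({x ∈ Λ | Q x < q0} ∩ Metric.ball z r))
    {Ω : Type*} [MeasurableSpace Ω] (P : Measure Ω) [IsProbabilityMeasure P]
    (X : ℕ → Ω → EuclideanSpace ℝ (Fin d))
    (hXmeas : ∀ i, Measurable (X i))
    (hXindep : iIndepFun X P)
    (hXunif : ∀ i, Measure.map (X i) P = (volume Λ)⁻¹ • volume.restrict Λ)
    (ε : ℝ) (hε : 0 < ε) :
    Tendsto (fun n => P {ω | ε < gabrielEditedMaxDist X Q q0 n ω}) atTop (nhds 0) :=
  stmt0_general Λ hΛcompact hΛconvex hΛpos Q q0 P X hXmeas hXindep hXunif ε hε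
end

section
/- Let X be a finite set of distinct points in ℝ^d, and let y : X → {−1, +1} be a labeling such that both labels occur. Let (a, b) be a pair of points of X with y(a) ≠ y(b) that minimizes ‖a − b‖ among all pairs of points of X with different labels. Then a and b are Gabriel neighbors of X, i.e., the open ball centered at (a+b)/2 with radius ‖a−b‖/2 contains no point of X other than a and b. In particular, the Gabriel edited set of (X, y) is nonempty. -/
section DiametralBall

variable {V P : Type*} [NormedAddCommGroup V] [NormedSpace ℝ V] [MetricSpace P]
  [NormedAddTorsor V P]

theorem dist_left_lt_of_mem_ball_midpoint {a b c : P}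
    (hc : c ∈ Metric.ball (midpoint ℝ a b) (dist a b / 2)) : dist c a < dist a b :=
  calc dist c a ≤ dist c (midpoint ℝ a b) + dist (midpoint ℝ a b) a := dist_triangle _ _ _
    _ < dist a b / 2 + dist a b / 2 := by
      rw [dist_midpoint_left, Real.norm_two, inv_mul_eq_div]
      exact add_lt_add_of_lt_of_le hc le_rfl
    _ = dist a b := add_halves _

theorem dist_right_lt_of_mem_ball_midpoint {a b c : P}
    (hc : c ∈ Metric.ball (midpoint ℝ a b) (dist a b / 2)) : dist c b < dist a b := by
  rw [midpoint_comm, dist_comm a b] at hc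
  rw [dist_comm a b]
  exact dist_left_lt_of_mem_ball_midpoint hc

end DiametralBall

theorem isGabrielNbr_of_forall_dist_le {d : ℕ} {α : Type*} {X : Set (EuclideanSpace ℝ (Fin d))}
    {y : EuclideanSpace ℝ (Fin d) → α} {a b : EuclideanSpace ℝ (Fin d)} (ha : a ∈ X)
    (hb : b ∈ X) (hab : y a ≠ y b)
    (hmin : ∀ a' ∈ X, ∀ b' ∈ X, y a' ≠ y b' → dist a b ≤ dist a' b') :
    IsGabrielNbr X a b := by
  refine ⟨ha, hb, ne_of_apply_ne y hab, fun c hc _ _ hball => ?_⟩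
  by_cases hca : y c = y a
  · have hcb : y c ≠ y b := hca ▸ hab
    exact (hmin c hc b hb hcb).not_gt (dist_right_lt_of_mem_ball_midpoint hball)
  · exact (hmin c hc a ha hca).not_gt (dist_left_lt_of_mem_ball_midpoint hball)

theorem stmt5_general {d : ℕ} (X : Finset (EuclideanSpace ℝ (Fin d)))
    (y : EuclideanSpace ℝ (Fin d) → ℝ)
    (a b : EuclideanSpace ℝ (Fin d)) (ha : a ∈ X) (hb : b ∈ X) (hab : y a ≠ y b)
    (hmin : ∀ a' ∈ X, ∀ b' ∈ X, y a' ≠ y b' → dist a b ≤ dist a' b') :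
    IsGabrielNbr (↑X) a b ∧
      ∃ p ∈ X, ∃ q ∈ X, IsGabrielNbr (↑X) p q ∧ y p ≠ y q := by
  have hgab : IsGabrielNbr (↑X) a b := isGabrielNbr_of_forall_dist_le ha hb hab hmin
  exact ⟨hgab, a, ha, b, hb, hgab, hab⟩

theorem stmt5 {d : ℕ} (X : Finset (EuclideanSpace ℝ (Fin d)))
    (y : EuclideanSpace ℝ (Fin d) → ℝ)
    (hy : ∀ x ∈ X, y x = 1 ∨ y x = -1)
    (hpos : ∃ x ∈ X, y x = 1) (hneg : ∃ x ∈ X, y x = -1)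
    (a b : EuclideanSpace ℝ (Fin d)) (ha : a ∈ X) (hb : b ∈ X) (hab : y a ≠ y b)
    (hmin : ∀ a' ∈ X, ∀ b' ∈ X, y a' ≠ y b' → dist a b ≤ dist a' b') :
    IsGabrielNbr (↑X) a b ∧
      ∃ p ∈ X, ∃ q ∈ X, IsGabrielNbr (↑X) p q ∧ y p ≠ y q :=
  stmt5_general X y a b ha hb hab hmin
end

section
/- Let Λ ⊂ ℝ^d be a compact convex set with positive Lebesgue measure, let Q : ℝ^d → ℝ be continuous on Λ, let q0 ∈ ℝ be such that K = {x ∈ Λ : Q(x) = q0} is nonempty, and assume that for every z ∈ K and every r > 0 the sets {x ∈ Λ : Q(x) > q0} ∩ B(z, r) and {x ∈ Λ : Q(x) < q0} ∩ B(z, r) have positive Lebesgue measure. Let x_1, x_2, … be i.i.d. random points uniformly distributed on Λ, label y_i = +1 if Q(x_i) ≥ q0 and y_i = −1 otherwise, and for each n let D_n denote the maximum over all pairs (x_i, x_j), 1 ≤ i < j ≤ n, that are Gabriel neighbors of {x_1, …, x_n} with y_i ≠ y_j, of the distance from the midpoint (x_i + x_j)/2 to K (with D_n = 0 if no such pair exists).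 Then for every ε > 0, P(D_n > ε) → 0 as n → ∞, i.e., the Characteristic Boundary Points become increasingly close to the decision boundary as the sample size increases. -/
/-!
If a Characteristic Boundary Point `m = (a + b) / 2` is at distance more than `ε` from
`K = {x ∈ Λ | Q x = q0}`, then the intermediate value theorem on the segment `[a, b] ⊆ Λ` puts a
point of `K` within `‖a - b‖ / 2` of `m`, so the empty Gabriel ball `B(m, ‖a - b‖ / 2)` contains
`B(m, ε)`. Cover the compact set `Λ` by finitely many balls `B(z, ε / 2)` with `z ∈ Λ`: one of
them lies in `B(m, ε)`, hence contains at most two of the (almost surely distinct) sample points.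
Since `Λ` is a convex body, each of these balls has positive probability `p` under the uniform
law, and the probability that at most two of `n` independent points fall into it is at most
`3 (1 - p) ^ ⌊n / 3⌋ → 0`.
-/

open MeasureTheory ProbabilityTheory Metric Filter

/-- The maximum distance from a Characteristic Boundary Point (the midpoint of a pair of
oppositely labeled Gabriel neighbors of `{x_0, …, x_{n-1}}`) to the decision boundary `K`,
set to `0` when no such pair exists. -/
noncomputable def cbpMaxDistToBoundary {d : ℕ} {Ω : Type*}
    (X : ℕ → Ω → EuclideanSpace ℝ (Fin d))
    (Q : EuclideanSpace ℝ (Fin d) → ℝ) (q0 : ℝ)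
    (K : Set (EuclideanSpace ℝ (Fin d))) (n : ℕ) (ω : Ω) : ℝ :=
  sSup (insert (0 : ℝ)
    {r : ℝ | ∃ i, ∃ j, i < j ∧ j < n ∧
      IsGabrielNbr ((fun k => X k ω) '' {k | k < n}) (X i ω) (X j ω) ∧
      ¬ ((q0 ≤ Q (X i ω)) ↔ (q0 ≤ Q (X j ω))) ∧
      r = Metric.infDist (midpoint ℝ (X i ω) (X j ω)) K})

section Geometry

variable {E : Type*} [NormedAddCommGroup E] [NormedSpace ℝ E]

lemma segment_subset_closedBall_midpoint (a b : E) :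
    segment ℝ a b ⊆ closedBall (midpoint ℝ a b) (dist a b / 2) := by
  have ha : dist a (midpoint ℝ a b) = dist a b / 2 := by
    rw [dist_left_midpoint, Real.norm_two, inv_mul_eq_div]
  have hb : dist b (midpoint ℝ a b) = dist a b / 2 := by
    rw [dist_right_midpoint, Real.norm_two, inv_mul_eq_div]
  exact (convex_closedBall _ _).segment_subset (mem_closedBall.2 ha.le)
    (mem_closedBall.2 hb.le)

lemma Convex.infDist_midpoint_le_of_mem_uIcc {Λ : Set E} (hΛ : Convex ℝ Λ) {Q : E → ℝ}
    (hQ : ContinuousOn Q Λ) {q0 : ℝ} {a b : E} (ha : a ∈ Λ) (hb : b ∈ Λ)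
    (hq : q0 ∈ Set.uIcc (Q a) (Q b)) :
    infDist (midpoint ℝ a b) {x ∈ Λ | Q x = q0} ≤ dist a b / 2 := by
  have hseg := (convex_segment a b).isPreconnected
  have hQseg : ContinuousOn Q (segment ℝ a b) := hQ.mono (hΛ.segment_subset ha hb)
  obtain ⟨z, hz, hQz⟩ : ∃ z ∈ segment ℝ a b, Q z = q0 := by
    rcases Set.mem_uIcc.1 hq with ⟨hqa, hqb⟩ | ⟨hqb, hqa⟩
    · exact hseg.intermediate_value₂ (left_mem_segment ℝ a b) (right_mem_segment ℝ a b)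
        hQseg continuousOn_const hqa hqb
    · obtain ⟨z, hz, h⟩ := hseg.intermediate_value₂ (left_mem_segment ℝ a b)
        (right_mem_segment ℝ a b) continuousOn_const hQseg hqa hqb
      exact ⟨z, hz, h.symm⟩
  calc infDist (midpoint ℝ a b) {x ∈ Λ | Q x = q0}
      ≤ dist (midpoint ℝ a b) z := infDist_le_dist_of_mem ⟨hΛ.segment_subset ha hb hz, hQz⟩
    _ ≤ dist a b / 2 := by
      rw [dist_comm]; exact mem_closedBall.1 (segment_subset_closedBall_midpoint a b hz)

lemma Convex.measure_ball_inter_pos [MeasurableSpace E] [BorelSpace E] (μ : Measure E)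
    [μ.IsOpenPosMeasure] {Λ : Set E} (hΛ : Convex ℝ Λ) (hint : (interior Λ).Nonempty)
    {z : E} (hz : z ∈ closure Λ) {r : ℝ} (hr : 0 < r) : 0 < μ (Λ ∩ ball z r) := by
  rw [← hΛ.closure_interior_eq_closure_of_nonempty_interior hint] at hz
  obtain ⟨y, hy, hyz⟩ := mem_closure_iff.1 hz r hr
  calc 0 < μ (interior Λ ∩ ball z r) :=
        (isOpen_interior.inter isOpen_ball).measure_pos μ ⟨y, hy, mem_ball'.2 hyz⟩
    _ ≤ μ (Λ ∩ ball z r) := measure_mono (Set.inter_subset_inter_left _ interior_subset)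

lemma Convex.interior_nonempty_of_measure_pos [MeasurableSpace E] [BorelSpace E]
    [FiniteDimensional ℝ E] (μ : Measure E) [μ.IsAddHaarMeasure] {Λ : Set E}
    (hΛ : Convex ℝ Λ) (hpos : 0 < μ Λ) : (interior Λ).Nonempty := by
  rw [hΛ.interior_nonempty_iff_affineSpan_eq_top]
  by_contra hspan
  exact hpos.ne' (measure_mono_null (subset_affineSpan ℝ Λ)
    (Measure.addHaar_affineSubspace μ _ hspan))

lemma Convex.cond_ball_pos [MeasurableSpace E] [BorelSpace E] [FiniteDimensional ℝ E]
    (μ : Measure E) [μ.IsAddHaarMeasure] {Λ : Set E} (hΛ : Convex ℝ Λ) (hΛmeas : MeasurableSet Λ)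
    (hfin : μ Λ ≠ ⊤) (hpos : 0 < μ Λ) {z : E} (hz : z ∈ closure Λ) {r : ℝ} (hr : 0 < r) :
    0 < μ[ball z r|Λ] := by
  rw [cond_apply hΛmeas]
  exact ENNReal.mul_pos (ENNReal.inv_ne_zero.2 hfin)
    (hΛ.measure_ball_inter_pos μ (hΛ.interior_nonempty_of_measure_pos μ hpos) hz hr).ne'

end Geometry

open Classical in
noncomputable def hitCount {α : Type*} (x : ℕ → α) (A : Set α) (n : ℕ) : ℕ :=
  ((Finset.range n).filter (fun k => x k ∈ A)).card

lemma exists_block_forall_notMem_of_hitCount_le {α : Type*} {x : ℕ → α} {A : Set α} {m n : ℕ}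
    (h : hitCount x A n ≤ m) :
    ∃ l < m + 1, ∀ k ∈ Finset.Ico (l * (n / (m + 1))) ((l + 1) * (n / (m + 1))), x k ∉ A := by
  classical
  by_contra! hblocks
  choose! f hf hfA using hblocks
  set b := n / (m + 1)
  have hmaps : ∀ l ∈ Finset.range (m + 1), f l ∈ (Finset.range n).filter (fun k => x k ∈ A) := by
    intro l hl
    have hl := Finset.mem_range.1 hl
    have hfl := Finset.mem_Ico.1 (hf l hl)
    have : (l + 1) * b ≤ n := (Nat.mul_le_mul_right b hl).trans (Nat.mul_div_le n (m + 1))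
    exact Finset.mem_filter.2 ⟨Finset.mem_range.2 (by omega), hfA l hl⟩
  have hinj : Set.InjOn f (Finset.range (m + 1)) := by
    intro l₁ hl₁ l₂ hl₂ heq
    have h₁ := Finset.mem_Ico.1 (hf l₁ (Finset.mem_range.1 hl₁))
    have h₂ := Finset.mem_Ico.1 (hf l₂ (Finset.mem_range.1 hl₂))
    have : l₁ < l₂ + 1 := Nat.lt_of_mul_lt_mul_right (show l₁ * b < (l₂ + 1) * b by omega)
    have : l₂ < l₁ + 1 := Nat.lt_of_mul_lt_mul_right (show l₂ * b < (l₁ + 1) * b by omega)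
    omega
  have := Finset.card_le_card_of_injOn f hmaps hinj
  rw [Finset.card_range] at this
  exact absurd (this.trans h) (by omega)

lemma hitCount_le_two {α : Type*} {x : ℕ → α} (hx : Function.Injective x) {A : Set α}
    {n i j : ℕ} (h : ∀ k < n, x k ∈ A → x k = x i ∨ x k = x j) : hitCount x A n ≤ 2 := by
  classical
  refine (Finset.card_le_card (t := {i, j}) fun k hk => ?_).trans Finset.card_le_two
  obtain ⟨hkn, hkA⟩ := Finset.mem_filter.1 hk
  rcases h k (Finset.mem_range.1 hkn) hkA with hki | hkj
  · simp [hx hki]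
  · simp [hx hkj]

lemma ProbabilityTheory.iIndepFun.measure_iInter_preimage_le_pow {Ω E : Type*} [MeasurableSpace Ω]
    [MeasurableSpace E] {P : Measure Ω} {X : ℕ → Ω → E} (hX : iIndepFun X P) {B : Set E}
    (hB : MeasurableSet B) {q : ENNReal} (hq : ∀ k, P (X k ⁻¹' B) ≤ q) (S : Finset ℕ) :
    P (⋂ k ∈ S, X k ⁻¹' B) ≤ q ^ S.card := by
  rw [hX.measure_inter_preimage_eq_mul S (sets := fun _ => B) fun _ _ => hB]
  exact Finset.prod_le_pow_card S _ q fun k _ => hq k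

lemma ProbabilityTheory.iIndepFun.measure_hitCount_le_le {Ω E : Type*} [MeasurableSpace Ω]
    [MeasurableSpace E] {P : Measure Ω} {X : ℕ → Ω → E} (hX : iIndepFun X P) {A : Set E}
    (hA : MeasurableSet A) {q : ENNReal} (hq : ∀ k, P (X k ⁻¹' Aᶜ) ≤ q) (m n : ℕ) :
    P {ω | hitCount (X · ω) A n ≤ m} ≤ (m + 1) * q ^ (n / (m + 1)) :=
  calc P {ω | hitCount (X · ω) A n ≤ m}
      ≤ P (⋃ l ∈ Finset.range (m + 1),
          ⋂ k ∈ Finset.Ico (l * (n / (m + 1))) ((l + 1) * (n / (m + 1))), X k ⁻¹' Aᶜ) := by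
        refine measure_mono fun ω hω => ?_
        obtain ⟨l, hl, hmiss⟩ := exists_block_forall_notMem_of_hitCount_le hω
        exact Set.mem_biUnion (Finset.mem_coe.2 (Finset.mem_range.2 hl))
          (Set.mem_iInter₂.2 hmiss)
    _ ≤ ∑ l ∈ Finset.range (m + 1), q ^ (n / (m + 1)) := by
        refine (measure_biUnion_finset_le _ _).trans (Finset.sum_le_sum fun l _ => ?_)
        have := hX.measure_iInter_preimage_le_pow hA.compl hq
          (Finset.Ico (l * (n / (m + 1))) ((l + 1) * (n / (m + 1))))
        rwa [Nat.card_Ico, ← Nat.sub_mul, Nat.add_sub_cancel_left, one_mul] at this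
    _ = (m + 1) * q ^ (n / (m + 1)) := by simp

theorem tendsto_measure_hitCount_le {Ω E : Type*} [MeasurableSpace Ω] [MeasurableSpace E]
    {P : Measure Ω} [IsProbabilityMeasure P] {X : ℕ → Ω → E} {μ : Measure E}
    (hXmeas : ∀ k, Measurable (X k)) (hXindep : iIndepFun X P)
    (hident : ∀ k, P.map (X k) = μ) {A : Set E} (hA : MeasurableSet A) (hμA : 0 < μ A)
    (m : ℕ) :
    Tendsto (fun n => P {ω | hitCount (X · ω) A n ≤ m}) atTop (nhds 0) := by
  have : IsProbabilityMeasure μ :=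
    hident 0 ▸ Measure.isProbabilityMeasure_map (hXmeas 0).aemeasurable
  have hmiss : ∀ k, P (X k ⁻¹' Aᶜ) ≤ μ Aᶜ := fun k => by
    rw [← Measure.map_apply (hXmeas k) hA.compl, hident k]
  have hq : μ Aᶜ < 1 := by
    rw [prob_compl_eq_one_sub hA]
    exact ENNReal.sub_lt_self ENNReal.one_ne_top one_ne_zero hμA.ne'
  have hlim : Tendsto (fun n => ((m : ENNReal) + 1) * μ Aᶜ ^ (n / (m + 1))) atTop (nhds 0) := by
    simpa using ENNReal.Tendsto.const_mul
      ((ENNReal.tendsto_pow_atTop_nhds_zero_of_lt_one hq).comp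
        (Nat.tendsto_div_const_atTop m.succ_ne_zero))
      (Or.inr (by simp))
  exact tendsto_of_tendsto_of_tendsto_of_le_of_le tendsto_const_nhds hlim (fun _ => zero_le)
    (hXindep.measure_hitCount_le_le hA hmiss m)

lemma ProbabilityTheory.IndepFun.measure_eq_eq_zero {Ω E : Type*} [MeasurableSpace Ω]
    [MeasurableSpace E] [MeasurableEq E] {P : Measure Ω} [IsFiniteMeasure P] {X Y : Ω → E}
    (h : IndepFun X Y P) (hX : AEMeasurable X P) (hY : AEMeasurable Y P)
    (hatom : ∀ y, P.map Y {y} = 0) : P {ω | X ω = Y ω} = 0 := by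
  have hprod := (indepFun_iff_map_prod_eq_prod_map_map hX hY).1 h
  have hdiag : {ω | X ω = Y ω} = (fun ω => (X ω, Y ω)) ⁻¹' Set.diagonal E := rfl
  rw [hdiag, ← Measure.map_apply_of_aemeasurable (hX.prodMk hY) measurableSet_diagonal, hprod,
    Measure.prod_apply measurableSet_diagonal]
  simp [Set.preimage, hatom]

lemma ProbabilityTheory.iIndepFun.ae_injective {Ω E ι : Type*} [Countable ι] [MeasurableSpace Ω]
    [MeasurableSpace E] [MeasurableEq E] {P : Measure Ω} [IsFiniteMeasure P] {X : ι → Ω → E}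
    (hX : iIndepFun X P) (hmeas : ∀ i, AEMeasurable (X i) P)
    (hatom : ∀ i y, P.map (X i) {y} = 0) : ∀ᵐ ω ∂P, Function.Injective (X · ω) := by
  have hne : ∀ᵐ ω ∂P, ∀ i j, i ≠ j → X i ω ≠ X j ω := by
    refine ae_all_iff.2 fun i => ae_all_iff.2 fun j => ?_
    rcases eq_or_ne i j with rfl | hij
    · exact ae_of_all _ fun _ h => absurd rfl h
    · rw [ae_iff]
      simpa [hij] using (hX.indepFun hij).measure_eq_eq_zero (hmeas i) (hmeas j) (hatom j)
  filter_upwards [hne] with ω hω i j hij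
  by_contra h
  exact hω i j h hij

section Gabriel

variable {d : ℕ}

lemma IsGabrielNbr.eq_or_eq_of_mem_ball {X : Set (EuclideanSpace ℝ (Fin d))}
    {a b c : EuclideanSpace ℝ (Fin d)} (h : IsGabrielNbr X a b) (hc : c ∈ X)
    (hcball : c ∈ ball (midpoint ℝ a b) (dist a b / 2)) : c = a ∨ c = b := by
  by_contra! hne
  exact h.2.2.2 c hc hne.1 hne.2 hcball

variable {Ω : Type*} {X : ℕ → Ω → EuclideanSpace ℝ (Fin d)} {Q : EuclideanSpace ℝ (Fin d) → ℝ}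
  {q0 ε : ℝ} {n : ℕ} {ω : Ω}

lemma exists_isGabrielNbr_of_lt_cbpMaxDistToBoundary {K : Set (EuclideanSpace ℝ (Fin d))}
    (hε : 0 ≤ ε) (h : ε < cbpMaxDistToBoundary X Q q0 K n ω) :
    ∃ i j, i < n ∧ j < n ∧ IsGabrielNbr ((X · ω) '' {k | k < n}) (X i ω) (X j ω) ∧
      ¬ ((q0 ≤ Q (X i ω)) ↔ (q0 ≤ Q (X j ω))) ∧
      ε < infDist (midpoint ℝ (X i ω) (X j ω)) K := by
  obtain ⟨r, hr, hεr⟩ := exists_lt_of_lt_csSup (Set.insert_nonempty _ _) h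
  rcases hr with rfl | ⟨i, j, hij, hjn, hG, hlab, rfl⟩
  · exact absurd hεr hε.not_gt
  · exact ⟨i, j, hij.trans hjn, hjn, hG, hlab, hεr⟩

lemma exists_sparse_ball_of_lt_cbpMaxDistToBoundary {Λ : Set (EuclideanSpace ℝ (Fin d))}
    (hΛ : Convex ℝ Λ) (hQ : ContinuousOn Q Λ) (hmem : ∀ k, X k ω ∈ Λ) (hε : 0 ≤ ε)
    (h : ε < cbpMaxDistToBoundary X Q q0 {x ∈ Λ | Q x = q0} n ω) :
    ∃ m ∈ Λ, ∃ i j, ∀ k < n, X k ω ∈ ball m ε → X k ω = X i ω ∨ X k ω = X j ω := by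
  obtain ⟨i, j, -, -, hG, hlab, hfar⟩ := exists_isGabrielNbr_of_lt_cbpMaxDistToBoundary hε h
  have hnear := hΛ.infDist_midpoint_le_of_mem_uIcc (q0 := q0) hQ (hmem i) (hmem j)
    (by grind [Set.mem_uIcc])
  refine ⟨_, hΛ.segment_subset (hmem i) (hmem j) (midpoint_mem_segment _ _), i, j,
    fun k hk hkball => hG.eq_or_eq_of_mem_ball ⟨k, hk, rfl⟩ ?_⟩
  exact ball_subset_ball (by linarith) hkball

lemma exists_hitCount_ball_le_two_of_lt_cbpMaxDistToBoundary
    {Λ : Set (EuclideanSpace ℝ (Fin d))} (hΛ : Convex ℝ Λ) (hQ : ContinuousOn Q Λ)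
    {T : Finset (EuclideanSpace ℝ (Fin d))} (hcover : Λ ⊆ ⋃ z ∈ T, ball z (ε / 2))
    (hmem : ∀ k, X k ω ∈ Λ) (hinj : Function.Injective (X · ω)) (hε : 0 ≤ ε)
    (h : ε < cbpMaxDistToBoundary X Q q0 {x ∈ Λ | Q x = q0} n ω) :
    ∃ z ∈ T, hitCount (X · ω) (ball z (ε / 2)) n ≤ 2 := by
  obtain ⟨m, hmΛ, i, j, hsparse⟩ := exists_sparse_ball_of_lt_cbpMaxDistToBoundary hΛ hQ hmem hε h
  obtain ⟨z, hzT, hmz⟩ := Set.mem_iUnion₂.1 (hcover hmΛ)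
  refine ⟨z, hzT, hitCount_le_two hinj fun k hk hkz => hsparse k hk ?_⟩
  exact ball_subset_ball' (by rw [dist_comm]; linarith [mem_ball.1 hmz]) hkz

lemma not_lt_cbpMaxDistToBoundary_of_subsingleton [Subsingleton (EuclideanSpace ℝ (Fin d))]
    {K : Set (EuclideanSpace ℝ (Fin d))} (hε : 0 ≤ ε) :
    ¬ ε < cbpMaxDistToBoundary X Q q0 K n ω := fun h => by
  obtain ⟨i, j, -, -, hG, -⟩ := exists_isGabrielNbr_of_lt_cbpMaxDistToBoundary hε h
  exact hG.2.2.1 (Subsingleton.elim _ _)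

end Gabriel

theorem stmt7_general {d : ℕ} (Λ : Set (EuclideanSpace ℝ (Fin d)))
    (hΛcompact : IsCompact Λ) (hΛconvex : Convex ℝ Λ) (hΛpos : 0 < volume Λ)
    (Q : EuclideanSpace ℝ (Fin d) → ℝ) (hQ : ContinuousOn Q Λ) (q0 : ℝ)
    {Ω : Type*} [MeasurableSpace Ω] (P : Measure Ω) [IsProbabilityMeasure P]
    (X : ℕ → Ω → EuclideanSpace ℝ (Fin d))
    (hXmeas : ∀ i, Measurable (X i))
    (hXindep : iIndepFun X P)
    (hXunif : ∀ i, Measure.map (X i) P = (volume Λ)⁻¹ • volume.restrict Λ)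
    (ε : ℝ) (hε : 0 < ε) :
    Tendsto
      (fun n => P {ω | ε < cbpMaxDistToBoundary X Q q0 {x ∈ Λ | Q x = q0} n ω})
      atTop (nhds 0) := by
  rcases subsingleton_or_nontrivial (EuclideanSpace ℝ (Fin d)) with hE | hE
  · simp [not_lt_cbpMaxDistToBoundary_of_subsingleton hε.le]
  -- the uniform law on `Λ` is Mathlib's conditional measure `volume[|Λ]`
  have hunif : ∀ i, P.map (X i) = volume[|Λ] := hXunif
  have hΛmeas : MeasurableSet Λ := hΛcompact.isClosed.measurableSet
  obtain ⟨T, hTΛ, hcover⟩ := hΛcompact.elim_nhds_subcover (ball · (ε / 2))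
    fun z _ => ball_mem_nhds z (half_pos hε)
  have hinΛ : ∀ᵐ ω ∂P, ∀ k, X k ω ∈ Λ := ae_all_iff.2 fun k =>
    ae_of_ae_map (hXmeas k).aemeasurable (hunif k ▸ ae_cond_mem hΛmeas)
  have hinj := hXindep.ae_injective (fun k => (hXmeas k).aemeasurable) fun k y => by
    rw [hunif k, cond_apply hΛmeas, measure_mono_null Set.inter_subset_right (measure_singleton y),
      mul_zero]
  have hbound : ∀ n, P {ω | ε < cbpMaxDistToBoundary X Q q0 {x ∈ Λ | Q x = q0} n ω} ≤
      ∑ z ∈ T, P {ω | hitCount (X · ω) (ball z (ε / 2)) n ≤ 2} := fun n => by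
    refine (measure_mono_ae ?_).trans (measure_biUnion_finset_le T _)
    filter_upwards [hinΛ, hinj] with ω hmem hωinj hD
    obtain ⟨z, hzT, hz⟩ := exists_hitCount_ball_le_two_of_lt_cbpMaxDistToBoundary hΛconvex hQ
      hcover hmem hωinj hε.le hD
    exact Set.mem_biUnion hzT hz
  refine tendsto_of_tendsto_of_tendsto_of_le_of_le tendsto_const_nhds ?_ (fun _ => zero_le) hbound
  simpa using tendsto_finsetSum T fun z hz =>
    tendsto_measure_hitCount_le hXmeas hXindep hunif measurableSet_ball
      (hΛconvex.cond_ball_pos volume hΛmeas hΛcompact.measure_lt_top.ne hΛpos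
        (subset_closure (hTΛ z hz)) (half_pos hε)) 2

theorem stmt7 {d : ℕ} (Λ : Set (EuclideanSpace ℝ (Fin d)))
    (hΛcompact : IsCompact Λ) (hΛconvex : Convex ℝ Λ) (hΛpos : 0 < volume Λ)
    (Q : EuclideanSpace ℝ (Fin d) → ℝ) (hQ : ContinuousOn Q Λ) (q0 : ℝ)
    (hK : ({x ∈ Λ | Q x = q0}).Nonempty)
    (hsides : ∀ z ∈ {x ∈ Λ | Q x = q0}, ∀ r : ℝ, 0 < r →
      0 < volume ({x ∈ Λ | q0 < Q x} ∩ Metric.ball z r) ∧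
      0 < volume ({x ∈ Λ | Q x < q0} ∩ Metric.ball z r))
    {Ω : Type*} [MeasurableSpace Ω] (P : Measure Ω) [IsProbabilityMeasure P]
    (X : ℕ → Ω → EuclideanSpace ℝ (Fin d))
    (hXmeas : ∀ i, Measurable (X i))
    (hXindep : iIndepFun X P)
    (hXunif : ∀ i, Measure.map (X i) P = (volume Λ)⁻¹ • volume.restrict Λ)
    (ε : ℝ) (hε : 0 < ε) :
    Tendsto
      (fun n => P {ω | ε < cbpMaxDistToBoundary X Q q0 {x ∈ Λ | Q x = q0} n ω})
      atTop (nhds 0) :=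
  stmt7_general Λ hΛcompact hΛconvex hΛpos Q hQ q0 P X hXmeas hXindep hXunif ε hε
end

section
/- Let Λ ⊂ ℝ^d be a compact convex set with positive Lebesgue measure, let Q : ℝ^d → ℝ be continuous on Λ, let q0 ∈ ℝ, and assume that both sets {x ∈ Λ : Q(x) ≥ q0} and {x ∈ Λ : Q(x) < q0} have positive Lebesgue measure. Let x_1, x_2, … be i.i.d. random points uniformly distributed on Λ, labeled y_i = +1 if Q(x_i) ≥ q0 and y_i = −1 otherwise. Then the probability that the Gabriel edited set of {x_1, …, x_n} is nonempty (i.e., that there exists a pair of Gabriel neighbors with different labels) tends to 1 as n → ∞. -/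
open MeasureTheory ProbabilityTheory Filter

/-!
As soon as both labels occur in a finite sample, a closest pair of differently labelled sample
points is a pair of Gabriel neighbors. Both labels fail to occur among `n` independent uniform
points only if all of them avoid one of the two label regions, which has probability at most
`a ^ n + b ^ n` with `a, b < 1` because each region has positive measure.
-/

lemma dist_lt_of_mem_ball_midpoint {E : Type*} [NormedAddCommGroup E] [NormedSpace ℝ E]
    {a b c : E} (hc : c ∈ Metric.ball (midpoint ℝ a b) (dist a b / 2)) :
    dist c a < dist a b := by
  have hm : dist (midpoint ℝ a b) a = dist a b / 2 := by
    rw [dist_midpoint_left, Real.norm_two]; ring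
  calc dist c a ≤ dist c (midpoint ℝ a b) + dist (midpoint ℝ a b) a := dist_triangle _ _ _
    _ < dist a b / 2 + dist a b / 2 := by rw [hm]; gcongr; exact hc
    _ = dist a b := add_halves _

namespace IsGabrielNbr

variable {d : ℕ} {S : Set (EuclideanSpace ℝ (Fin d))} {a b : EuclideanSpace ℝ (Fin d)}

lemma symm (h : IsGabrielNbr S a b) : IsGabrielNbr S b a := by
  obtain ⟨ha, hb, hab, hball⟩ := h
  refine ⟨hb, ha, hab.symm, fun c hc hcb hca => ?_⟩
  rw [midpoint_comm, dist_comm]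
  exact hball c hc hca hcb

end IsGabrielNbr

/-- Take a closest pair with different labels: a third point in its diametral ball would be
strictly closer to both of them, whatever its label. -/
lemma exists_isGabrielNbr_of_mem_of_not_mem {d : ℕ} {S : Set (EuclideanSpace ℝ (Fin d))}
    (hS : S.Finite) (L : EuclideanSpace ℝ (Fin d) → Prop) {a₀ b₀ : EuclideanSpace ℝ (Fin d)}
    (ha₀ : a₀ ∈ S) (hb₀ : b₀ ∈ S) (hLa₀ : L a₀) (hLb₀ : ¬ L b₀) :
    ∃ a b, IsGabrielNbr S a b ∧ L a ∧ ¬ L b := by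
  let T := {p : EuclideanSpace ℝ (Fin d) × EuclideanSpace ℝ (Fin d) |
    p.1 ∈ S ∧ p.2 ∈ S ∧ L p.1 ∧ ¬ L p.2}
  have hT : T.Finite := (hS.prod hS).subset fun p hp => ⟨hp.1, hp.2.1⟩
  obtain ⟨⟨a, b⟩, ⟨ha, hb, hLa, hLb⟩, hmin⟩ :=
    Set.exists_min_image T (fun p => dist p.1 p.2) hT ⟨(a₀, b₀), ha₀, hb₀, hLa₀, hLb₀⟩
  refine ⟨a, b, ⟨ha, hb, fun hab => hLb (hab ▸ hLa), fun c hc _ _ hball => ?_⟩, hLa, hLb⟩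
  by_cases hLc : L c
  · have hcb : dist c b < dist a b := by
      rw [midpoint_comm, dist_comm a b] at hball
      exact dist_comm a b ▸ dist_lt_of_mem_ball_midpoint hball
    exact (hmin (c, b) ⟨hc, hb, hLc, hLb⟩).not_gt hcb
  · have hac : dist a c < dist a b := dist_comm c a ▸ dist_lt_of_mem_ball_midpoint hball
    exact (hmin (a, c) ⟨ha, hc, hLa, hLc⟩).not_gt hac

lemma exists_isGabrielNbr_image_of_labels {d : ℕ} (x : ℕ → EuclideanSpace ℝ (Fin d)) {n : ℕ}
    (L : EuclideanSpace ℝ (Fin d) → Prop) {i₀ j₀ : ℕ} (hi₀ : i₀ < n) (hj₀ : j₀ < n)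
    (hLi₀ : L (x i₀)) (hLj₀ : ¬ L (x j₀)) :
    ∃ i j, i < j ∧ j < n ∧ IsGabrielNbr (x '' {k | k < n}) (x i) (x j) ∧
      ¬ (L (x i) ↔ L (x j)) := by
  obtain ⟨a, b, hab, hLa, hLb⟩ := exists_isGabrielNbr_of_mem_of_not_mem
    ((Set.finite_lt_nat n).image x) L ⟨i₀, hi₀, rfl⟩ ⟨j₀, hj₀, rfl⟩ hLi₀ hLj₀
  obtain ⟨i, hi, rfl⟩ := hab.1
  obtain ⟨j, hj, rfl⟩ := hab.2.1
  rcases lt_or_gt_of_ne (fun hij : i = j => hab.2.2.1 (congrArg x hij)) with hij | hji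
  · exact ⟨i, j, hij, hj, hab, fun h => hLb (h.mp hLa)⟩
  · exact ⟨j, i, hji, hi, hab.symm, fun h => hLb (h.mpr hLa)⟩

section Probability

variable {Ω E : Type*} [MeasurableSpace Ω] [MeasurableSpace E] {P : Measure Ω}

lemma measure_preimage_of_map_eq_smul_restrict {μ : Measure E} {Λ : Set E} {c : ENNReal}
    {Y : Ω → E} (hY : Measurable Y) (hmap : Measure.map Y P = c • μ.restrict Λ)
    {C : Set E} (hC : MeasurableSet C) : P (Y ⁻¹' C) = c * μ (C ∩ Λ) := by
  rw [← Measure.map_apply hY hC, hmap, Measure.smul_apply, Measure.restrict_apply hC,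
    smul_eq_mul]

lemma ProbabilityTheory.iIndepFun.measure_biInter_preimage_range {X : ℕ → Ω → E} (hX : iIndepFun X P)
    {C : Set E} (hC : MeasurableSet C) {p : ENNReal} (hp : ∀ i, P (X i ⁻¹' C) = p) (n : ℕ) :
    P (⋂ i ∈ Finset.range n, X i ⁻¹' C) = p ^ n := by
  rw [hX.meas_biInter fun i _ => ⟨C, hC, rfl⟩, Finset.prod_congr rfl fun i _ => hp i,
    Finset.prod_const, Finset.card_range]

lemma inv_mul_measure_inter_lt_one {μ : Measure E} {Λ C : Set E} (hΛ : μ Λ ≠ ⊤)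
    (hC : MeasurableSet C) (hΛC : 0 < μ (Λ \ C)) : (μ Λ)⁻¹ * μ (C ∩ Λ) < 1 := by
  have hlt : μ (C ∩ Λ) < μ Λ := by
    rw [← measure_inter_add_sdiff Λ hC, Set.inter_comm C Λ]
    exact ENNReal.lt_add_right (measure_ne_top_of_subset Set.inter_subset_left hΛ) hΛC.ne'
  rw [← ENNReal.div_eq_inv_mul]
  exact ENNReal.div_lt_of_lt_mul (by rwa [one_mul])

lemma one_sub_measure_compl_le [IsProbabilityMeasure P] (s : Set Ω) : 1 - P sᶜ ≤ P s := by
  rw [tsub_le_iff_right, ← measure_univ (μ := P), ← Set.union_compl_self s]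
  exact measure_union_le s sᶜ

lemma tendsto_measure_one_of_compl_subset_union [IsProbabilityMeasure P] {G A B : ℕ → Set Ω}
    {a b : ENNReal} (ha : a < 1) (hb : b < 1) (hG : ∀ n, (G n)ᶜ ⊆ A n ∪ B n)
    (hA : ∀ n, P (A n) = a ^ n) (hB : ∀ n, P (B n) = b ^ n) :
    Tendsto (fun n => P (G n)) atTop (nhds 1) := by
  have hbound : ∀ n, 1 - (a ^ n + b ^ n) ≤ P (G n) := fun n =>
    calc 1 - (a ^ n + b ^ n) = 1 - (P (A n) + P (B n)) := by rw [hA, hB]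
      _ ≤ 1 - P (G n)ᶜ :=
          tsub_le_tsub_left ((measure_mono (hG n)).trans (measure_union_le _ _)) 1
      _ ≤ P (G n) := one_sub_measure_compl_le _
  have hlim : Tendsto (fun n => 1 - (a ^ n + b ^ n)) atTop (nhds 1) := by
    have h0 := (ENNReal.tendsto_pow_atTop_nhds_zero_of_lt_one ha).add
      (ENNReal.tendsto_pow_atTop_nhds_zero_of_lt_one hb)
    rw [add_zero] at h0
    simpa using ENNReal.Tendsto.sub tendsto_const_nhds h0 (Or.inl ENNReal.one_ne_top)
  exact tendsto_of_tendsto_of_tendsto_of_le_of_le hlim tendsto_const_nhds hbound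
    fun n => prob_le_one

end Probability

theorem stmt8_general {d : ℕ} (Λ : Set (EuclideanSpace ℝ (Fin d)))
    (hΛcompact : IsCompact Λ)
    (Q : EuclideanSpace ℝ (Fin d) → ℝ) (hQ : ContinuousOn Q Λ) (q0 : ℝ)
    (hpos : 0 < volume {x ∈ Λ | q0 ≤ Q x}) (hneg : 0 < volume {x ∈ Λ | Q x < q0})
    {Ω : Type*} [MeasurableSpace Ω] (P : Measure Ω) [IsProbabilityMeasure P]
    (X : ℕ → Ω → EuclideanSpace ℝ (Fin d))
    (hXmeas : ∀ i, Measurable (X i))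
    (hXindep : iIndepFun X P)
    (hXunif : ∀ i, Measure.map (X i) P = (volume Λ)⁻¹ • volume.restrict Λ) :
    Tendsto (fun n : ℕ =>
        P {ω | ∃ i, ∃ j, i < j ∧ j < n ∧
          IsGabrielNbr ((fun k => X k ω) '' {k | k < n}) (X i ω) (X j ω) ∧
          ¬ ((q0 ≤ Q (X i ω)) ↔ (q0 ≤ Q (X j ω)))})
      atTop (nhds 1) := by
  set A := {x ∈ Λ | q0 ≤ Q x}
  set B := {x ∈ Λ | Q x < q0}
  have hA : MeasurableSet A :=
    (hQ.preimage_isClosed_of_isClosed hΛcompact.isClosed isClosed_Ici).measurableSet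
  have hBA : B = Λ \ A := by
    ext x
    simp only [A, B, Set.mem_sdiff, Set.mem_ofPred_eq, not_and, not_le]
    exact ⟨fun h => ⟨h.1, fun _ => h.2⟩, fun h => ⟨h.1, h.2 h.1⟩⟩
  have hB : MeasurableSet B := hBA ▸ hΛcompact.measurableSet.diff hA
  have hlaw (C) (hC : MeasurableSet C) (n : ℕ) :=
    hXindep.measure_biInter_preimage_range hC
      (fun i => measure_preimage_of_map_eq_smul_restrict (hXmeas i) (hXunif i) hC) n
  refine tendsto_measure_one_of_compl_subset_union
    (inv_mul_measure_inter_lt_one hΛcompact.measure_ne_top hA.compl ?_)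
    (inv_mul_measure_inter_lt_one hΛcompact.measure_ne_top hB.compl ?_)
    (fun n ω hω => ?_) (hlaw _ hA.compl) (hlaw _ hB.compl)
  · rwa [Set.sdiff_compl, Set.inter_eq_right.mpr (Set.sep_subset _ _)]
  · rwa [Set.sdiff_compl, Set.inter_eq_right.mpr (Set.sep_subset _ _)]
  · by_contra hcov
    simp only [Set.mem_union, Set.mem_iInter, Finset.mem_range, Set.mem_preimage,
      Set.mem_compl_iff, not_or, not_forall, not_not] at hcov
    obtain ⟨⟨i, hi, hiA⟩, ⟨j, hj, hjB⟩⟩ := hcov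
    exact hω (exists_isGabrielNbr_image_of_labels (fun k => X k ω) (q0 ≤ Q ·) hi hj hiA.2
      (not_le.mpr hjB.2))

theorem stmt8 {d : ℕ} (Λ : Set (EuclideanSpace ℝ (Fin d)))
    (hΛcompact : IsCompact Λ) (hΛconvex : Convex ℝ Λ) (hΛpos : 0 < volume Λ)
    (Q : EuclideanSpace ℝ (Fin d) → ℝ) (hQ : ContinuousOn Q Λ) (q0 : ℝ)
    (hpos : 0 < volume {x ∈ Λ | q0 ≤ Q x}) (hneg : 0 < volume {x ∈ Λ | Q x < q0})
    {Ω : Type*} [MeasurableSpace Ω] (P : Measure Ω) [IsProbabilityMeasure P]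
    (X : ℕ → Ω → EuclideanSpace ℝ (Fin d))
    (hXmeas : ∀ i, Measurable (X i))
    (hXindep : iIndepFun X P)
    (hXunif : ∀ i, Measure.map (X i) P = (volume Λ)⁻¹ • volume.restrict Λ) :
    Tendsto (fun n : ℕ =>
        P {ω | ∃ i, ∃ j, i < j ∧ j < n ∧
          IsGabrielNbr ((fun k => X k ω) '' {k | k < n}) (X i ω) (X j ω) ∧
          ¬ ((q0 ≤ Q (X i ω)) ↔ (q0 ≤ Q (X j ω)))})
      atTop (nhds 1) :=
  stmt8_general Λ hΛcompact Q hQ q0 hpos hneg P X hXmeas hXindep hXunif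
end
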